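/- For every integer d ≥ 2 there exist a Hermitian matrix R on ℂ^d⊗ℂ^d and a Hermitian matrix S on ℂ^d such that R − T_b(J), R + T_b(J), I_d⊗S − T_b(R), and I_d⊗S + T_b(R) are all positive semidefinite and Tr(S) = 2, where J is the Choi operator of M_d. (This establishes β(M_d) ≤ 2 and hence C(M_d) ≤ 1 for all d; one may take R = (1/(d−1))∑_{j=0}^{d−2}|0⟩⟨0|⊗|j⟩⟨j| + ∑_{j=0}^{d−1}|j⟩⟨j|⊗|d−1⟩⟨d−1| + |ψ⟩⟨ψ| with |ψ⟩ = (1/√(d−1))∑_{j=1}^{d−1}|j⟩⊗|j−1⟩, and S = (1/(d−1))∑_{j=0}^{d−2}|j⟩⟨j| + |d−1⟩⟨d−1|.) -/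

import Mathlib

open Matrix Kronecker ComplexOrder

/-- Partial transpose on the second tensor factor. -/
noncomputable def ptransposeB {m n : ℕ}
    (M : Matrix (Fin m × Fin n) (Fin m × Fin n) ℂ) :
    Matrix (Fin m × Fin n) (Fin m × Fin n) ℂ :=
  Matrix.of fun p q => M (p.1, q.2) (q.1, p.2)

/-- The basis ket |i,j⟩ of ℂ^d ⊗ ℂ^d (zero if out of range). -/
noncomputable def ket2 (d i j : ℕ) : Fin d × Fin d → ℂ := fun p =>
  if (p.1 : ℕ) = i ∧ (p.2 : ℕ) = j then 1 else 0

/-- The unnormalized Choi operator of the channel M_d. -/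
noncomputable def choiMd (d : ℕ) : Matrix (Fin d × Fin d) (Fin d × Fin d) ℂ :=
  ∑ j ∈ Finset.range (d - 1),
    ((1 / ((d : ℂ) - 1)) • Matrix.vecMulVec (ket2 d 0 j) (star (ket2 d 0 j)) +
      Matrix.vecMulVec (ket2 d (j+1) (d-1)) (star (ket2 d (j+1) (d-1))) +
      ((1 / (Real.sqrt ((d : ℝ) - 1)) : ℝ) : ℂ) •
        (Matrix.vecMulVec (ket2 d 0 j) (star (ket2 d (j+1) (d-1))) +
          Matrix.vecMulVec (ket2 d (j+1) (d-1)) (star (ket2 d 0 j))))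

/-!
Write `d = n + 1`. Each of the four matrices is an explicit nonnegative combination of rank-one
projectors. With `u± = |0,n⟩ ± ψ`, `R - T_b J = |u₋⟩⟨u₋|` and `R + T_b J = |u₊⟩⟨u₊|` plus diagonal
projectors. Partial transposition turns `|ψ⟩⟨ψ|` into `n⁻¹ F`, where `F` is the permutation
`|k+1,j⟩ ↦ |j+1,k⟩` of the basis of `span {|a,b⟩ : a ≥ 1, b < n}`; so, with `P` the projector onto
that span, `1 ⊗ S - T_b R = n⁻¹ (P - F)` and `1 ⊗ S + T_b R = n⁻¹ (P + F)` plus diagonal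
projectors. As `F` is an involution, `P ± F = ½ ∑ₑ |e ± F e⟩⟨e ± F e|` over these basis vectors.
-/

open Finset

section PartialTranspose

variable {m n : ℕ}

lemma ptransposeB_add (M N : Matrix (Fin m × Fin n) (Fin m × Fin n) ℂ) :
    ptransposeB (M + N) = ptransposeB M + ptransposeB N := rfl

lemma ptransposeB_smul {R : Type*} [SMul R ℂ] (x : R)
    (M : Matrix (Fin m × Fin n) (Fin m × Fin n) ℂ) :
    ptransposeB (x • M) = x • ptransposeB M := rfl

lemma ptransposeB_sum {κ : Type*} (s : Finset κ)
    (f : κ → Matrix (Fin m × Fin n) (Fin m × Fin n) ℂ) :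
    ptransposeB (∑ k ∈ s, f k) = ∑ k ∈ s, ptransposeB (f k) :=
  map_sum (AddMonoidHom.mk' ptransposeB ptransposeB_add) f s

end PartialTranspose

section VecMulVec

variable {ι κ α : Type*} [NonUnitalNonAssocSemiring α]

lemma sum_vecMulVec (s : Finset κ) (v : κ → ι → α) (w : ι → α) :
    vecMulVec (∑ k ∈ s, v k) w = ∑ k ∈ s, vecMulVec (v k) w := by
  ext i j; simp [vecMulVec_apply, Matrix.sum_apply, Finset.sum_mul]

lemma vecMulVec_sum (s : Finset κ) (v : ι → α) (w : κ → ι → α) :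
    vecMulVec v (∑ k ∈ s, w k) = ∑ k ∈ s, vecMulVec v (w k) := by
  ext i j; simp [vecMulVec_apply, Matrix.sum_apply, Finset.mul_sum]

end VecMulVec

/-- Twice this sum is `∑ |f j k⟩⟨f j k|` with `f j k = e j k + ε e k j`. -/
lemma posSemidef_sum_vecMulVec_add_swap {ι κ : Type*} [Fintype ι] (s : Finset κ)
    (e : κ → κ → ι → ℂ) {ε : ℝ} (hε : ε * ε = 1) :
    (∑ j ∈ s, ∑ k ∈ s, (vecMulVec (e j k) (star (e j k)) +
      ε • vecMulVec (e j k) (star (e k j)))).PosSemidef := by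
  set f : κ → κ → ι → ℂ := fun j k => e j k + ε • e k j
  have hsum : ∑ j ∈ s, ∑ k ∈ s, vecMulVec (f j k) (star (f j k)) =
      (2 : ℝ) • ∑ j ∈ s, ∑ k ∈ s, (vecMulVec (e j k) (star (e j k)) +
        ε • vecMulVec (e j k) (star (e k j))) := by
    have hswap : ∀ g : κ → κ → Matrix ι ι ℂ, ∑ j ∈ s, ∑ k ∈ s, g k j = ∑ j ∈ s, ∑ k ∈ s, g j k :=
      fun g => Finset.sum_comm
    simp only [f, star_add, star_smul, star_trivial, add_vecMulVec, vecMulVec_add, smul_vecMulVec,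
      vecMulVec_smul, Finset.sum_add_distrib, ← Finset.smul_sum,
      hswap fun j k => vecMulVec (e j k) (star (e j k)),
      hswap fun j k => vecMulVec (e j k) (star (e k j))]
    rw [smul_add, smul_smul, hε, one_smul]
    module
  have := (posSemidef_sum s fun j _ => posSemidef_sum s fun k _ =>
    posSemidef_vecMulVec_self_star (f j k)).smul (show (0:ℝ) ≤ 1/2 by norm_num)
  rwa [hsum, smul_smul, show (1/2 : ℝ) * 2 = 1 by norm_num, one_smul] at this

section Kets

variable (d : ℕ)

lemma star_ket2 (i j : ℕ) : star (ket2 d i j) = ket2 d i j := by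
  ext p; simp [ket2, apply_ite]

noncomputable def ketbra (a b c e : ℕ) : Matrix (Fin d × Fin d) (Fin d × Fin d) ℂ :=
  vecMulVec (ket2 d a b) (ket2 d c e)

lemma ptransposeB_ketbra (a b c e : ℕ) :
    ptransposeB (ketbra d a b c e) = ketbra d a e c b := by
  ext p q
  simp only [ptransposeB, ketbra, of_apply, vecMulVec_apply, ket2]
  split_ifs <;> simp_all

lemma ketbra_self (a b : ℕ) : ketbra d a b a b = diagonal (ket2 d a b) := by
  ext p q
  simp only [ketbra, vecMulVec_apply, diagonal_apply, ket2]
  split_ifs <;> simp_all [Prod.ext_iff, Fin.ext_iff]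

lemma posSemidef_ketbra_self (a b : ℕ) : (ketbra d a b a b).PosSemidef := by
  simpa [ketbra, star_ket2] using posSemidef_vecMulVec_self_star (ket2 d a b)

end Kets

/-! Here `d = n + 1`; `psiVec`, `feasR`, `feasS` are the `ψ`, `R`, `S` of the statement, with the
term `j = 0` of `∑ⱼ |j⟩⟨j| ⊗ |d-1⟩⟨d-1|` in `R` split off. -/

section FeasiblePoint

variable (n : ℕ)

noncomputable def psiVec : Fin (n+1) × Fin (n+1) → ℂ :=
  (√(n : ℝ))⁻¹ • ∑ j ∈ range n, ket2 (n+1) (j+1) j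

noncomputable def projFirstZero : Matrix (Fin (n+1) × Fin (n+1)) (Fin (n+1) × Fin (n+1)) ℂ :=
  ∑ j ∈ range n, ketbra (n+1) 0 j 0 j

noncomputable def projSecondLast : Matrix (Fin (n+1) × Fin (n+1)) (Fin (n+1) × Fin (n+1)) ℂ :=
  ∑ j ∈ range n, ketbra (n+1) (j+1) n (j+1) n

noncomputable def projBulk : Matrix (Fin (n+1) × Fin (n+1)) (Fin (n+1) × Fin (n+1)) ℂ :=
  ∑ j ∈ range n, ∑ k ∈ range n, ketbra (n+1) (j+1) k (j+1) k

noncomputable def swapBulk : Matrix (Fin (n+1) × Fin (n+1)) (Fin (n+1) × Fin (n+1)) ℂ :=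
  ∑ j ∈ range n, ∑ k ∈ range n, ketbra (n+1) (j+1) k (k+1) j

noncomputable def feasR : Matrix (Fin (n+1) × Fin (n+1)) (Fin (n+1) × Fin (n+1)) ℂ :=
  (n : ℝ)⁻¹ • projFirstZero n + ketbra (n+1) 0 n 0 n + projSecondLast n +
    vecMulVec (psiVec n) (star (psiVec n))

noncomputable def feasS : Matrix (Fin (n+1)) (Fin (n+1)) ℂ :=
  diagonal fun j => if (j : ℕ) < n then ((n : ℝ)⁻¹ : ℂ) else 1

lemma star_psiVec : star (psiVec n) = psiVec n := by
  simp only [psiVec, star_smul, star_trivial, star_sum, star_ket2]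

lemma choiMd_succ : choiMd (n+1) = ∑ j ∈ range n,
    ((n : ℝ)⁻¹ • ketbra (n+1) 0 j 0 j + ketbra (n+1) (j+1) n (j+1) n +
      (√(n : ℝ))⁻¹ • (ketbra (n+1) 0 j (j+1) n + ketbra (n+1) (j+1) n 0 j)) := by
  simp only [choiMd, star_ket2, Nat.add_sub_cancel, RCLike.real_smul_eq_coe_smul (K := ℂ)]
  push_cast
  simp [ketbra]

lemma ptransposeB_choiMd_succ : ptransposeB (choiMd (n+1)) =
    (n : ℝ)⁻¹ • projFirstZero n + projSecondLast n +
      (vecMulVec (ket2 (n+1) 0 n) (psiVec n) + vecMulVec (psiVec n) (ket2 (n+1) 0 n)) := by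
  simp only [choiMd_succ, ptransposeB_sum, ptransposeB_add, ptransposeB_smul, ptransposeB_ketbra,
    psiVec, vecMulVec_smul, smul_vecMulVec, vecMulVec_sum, sum_vecMulVec, projFirstZero,
    projSecondLast, Finset.sum_add_distrib, ← Finset.smul_sum, smul_add]
  rfl

lemma feasR_sub_ptransposeB_choiMd :
    feasR n - ptransposeB (choiMd (n+1)) =
      vecMulVec (ket2 (n+1) 0 n - psiVec n) (star (ket2 (n+1) 0 n - psiVec n)) := by
  rw [ptransposeB_choiMd_succ, feasR, star_sub, star_ket2, star_psiVec, sub_vecMulVec,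
    vecMulVec_sub, vecMulVec_sub]
  simp only [ketbra]
  abel

lemma feasR_add_ptransposeB_choiMd :
    feasR n + ptransposeB (choiMd (n+1)) =
      (2 : ℝ) • ((n : ℝ)⁻¹ • projFirstZero n + projSecondLast n) +
        vecMulVec (ket2 (n+1) 0 n + psiVec n) (star (ket2 (n+1) 0 n + psiVec n)) := by
  rw [ptransposeB_choiMd_succ, feasR, star_add, star_ket2, star_psiVec, add_vecMulVec,
    vecMulVec_add, vecMulVec_add]
  simp only [ketbra]
  module

lemma vecMulVec_psiVec_self : vecMulVec (psiVec n) (psiVec n) =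
    (n : ℝ)⁻¹ • ∑ j ∈ range n, ∑ k ∈ range n, ketbra (n+1) (j+1) j (k+1) k := by
  have hsqrt : (√(n : ℝ))⁻¹ * (√(n : ℝ))⁻¹ = (n : ℝ)⁻¹ := by
    rw [← mul_inv, Real.mul_self_sqrt n.cast_nonneg]
  simp only [psiVec, smul_vecMulVec, vecMulVec_smul, sum_vecMulVec, vecMulVec_sum, ← smul_sum,
    smul_smul, hsqrt, ketbra]
  rw [Finset.sum_comm]

lemma ptransposeB_feasR : ptransposeB (feasR n) =
    (n : ℝ)⁻¹ • projFirstZero n + ketbra (n+1) 0 n 0 n + projSecondLast n +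
      (n : ℝ)⁻¹ • swapBulk n := by
  simp only [feasR, ptransposeB_add, ptransposeB_smul, projFirstZero, projSecondLast, swapBulk,
    ptransposeB_sum, ptransposeB_ketbra, star_psiVec, vecMulVec_psiVec_self]

lemma one_kronecker_feasS : (1 : Matrix (Fin (n+1)) (Fin (n+1)) ℂ) ⊗ₖ feasS n =
    (n : ℝ)⁻¹ • (projFirstZero n + projBulk n) + ketbra (n+1) 0 n 0 n + projSecondLast n := by
  have hlower : projFirstZero n + projBulk n =
      ∑ i ∈ range (n+1), ∑ j ∈ range n, ketbra (n+1) i j i j := by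
    rw [Finset.sum_range_succ', projFirstZero, projBulk]
    exact add_comm _ _
  have hupper : ketbra (n+1) 0 n 0 n + projSecondLast n =
      ∑ i ∈ range (n+1), ketbra (n+1) i n i n := by
    rw [Finset.sum_range_succ', projSecondLast]
    exact add_comm _ _
  have hdiag : ∀ s : Finset ℕ, ∀ f : ℕ → Fin (n+1) × Fin (n+1) → ℂ,
      ∑ i ∈ s, diagonal (f i) = diagonal (∑ i ∈ s, f i) :=
    fun s f => (map_sum (diagonalAddMonoidHom _ ℂ) f s).symm
  rw [add_assoc, hlower, hupper, feasS, ← diagonal_one, diagonal_kronecker_diagonal]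
  simp only [ketbra_self, hdiag, ← diagonal_smul]
  rw [diagonal_add]
  congr 1
  funext ⟨p, q⟩
  simp only [Complex.ofReal_natCast, mul_ite, one_mul, mul_one, Pi.smul_apply, Finset.sum_apply,
    ket2, ite_and, sum_ite_irrel, sum_ite_eq, mem_range, sum_const_zero, p.isLt, ↓reduceIte,
    smul_ite, Complex.real_smul, Complex.ofReal_inv, smul_zero]
  have := q.isLt
  split_ifs <;> first | omega | simp

lemma posSemidef_projBulk_add_smul_swapBulk {ε : ℝ} (hε : ε * ε = 1) :
    (projBulk n + ε • swapBulk n).PosSemidef := by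
  have h := posSemidef_sum_vecMulVec_add_swap (range n) (fun j k => ket2 (n+1) (j+1) k) hε
  simp only [star_ket2, Finset.sum_add_distrib, ← Finset.smul_sum] at h
  exact h

lemma isHermitian_feasS : (feasS n).IsHermitian := by
  refine isHermitian_diagonal_of_self_adjoint _ (funext fun j => ?_)
  split_ifs <;> simp [Pi.star_apply, *]

lemma trace_feasS (hn : n ≠ 0) : (feasS n).trace = 2 := by
  rw [feasS, trace_diagonal, Fin.sum_univ_eq_sum_range (fun j => if j < n then _ else _),
    Finset.sum_range_succ, Finset.sum_congr rfl fun j hj => if_pos (mem_range.mp hj)]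
  simp [hn, one_add_one_eq_two]

lemma posSemidef_projFirstZero : (projFirstZero n).PosSemidef :=
  posSemidef_sum _ fun _ _ => posSemidef_ketbra_self ..

lemma posSemidef_projSecondLast : (projSecondLast n).PosSemidef :=
  posSemidef_sum _ fun _ _ => posSemidef_ketbra_self ..

lemma posSemidef_feasR : (feasR n).PosSemidef :=
  ((((posSemidef_projFirstZero n).smul (by positivity)).add (posSemidef_ketbra_self ..)).add
    (posSemidef_projSecondLast n)).add (posSemidef_vecMulVec_self_star _)

lemma one_kronecker_feasS_sub_ptransposeB_feasR :
    (1 : Matrix (Fin (n+1)) (Fin (n+1)) ℂ) ⊗ₖ feasS n - ptransposeB (feasR n) =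
      (n : ℝ)⁻¹ • (projBulk n + (-1 : ℝ) • swapBulk n) := by
  rw [one_kronecker_feasS, ptransposeB_feasR]
  module

lemma one_kronecker_feasS_add_ptransposeB_feasR :
    (1 : Matrix (Fin (n+1)) (Fin (n+1)) ℂ) ⊗ₖ feasS n + ptransposeB (feasR n) =
      (2 : ℝ) • ((n : ℝ)⁻¹ • projFirstZero n + ketbra (n+1) 0 n 0 n + projSecondLast n) +
        (n : ℝ)⁻¹ • (projBulk n + (1 : ℝ) • swapBulk n) := by
  rw [one_kronecker_feasS, ptransposeB_feasR]
  module

end FeasiblePoint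

theorem stmt4 (d : ℕ) (hd : 2 ≤ d) :
    ∃ (R : Matrix (Fin d × Fin d) (Fin d × Fin d) ℂ) (S : Matrix (Fin d) (Fin d) ℂ),
      R.IsHermitian ∧ S.IsHermitian ∧
      (R - ptransposeB (choiMd d)).PosSemidef ∧
      (R + ptransposeB (choiMd d)).PosSemidef ∧
      ((1 : Matrix (Fin d) (Fin d) ℂ) ⊗ₖ S - ptransposeB R).PosSemidef ∧
      ((1 : Matrix (Fin d) (Fin d) ℂ) ⊗ₖ S + ptransposeB R).PosSemidef ∧
      S.trace = 2 := by
  obtain ⟨n, rfl⟩ : ∃ n, d = n + 1 := ⟨d - 1, by omega⟩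
  have hc : (0 : ℝ) ≤ (n : ℝ)⁻¹ := by positivity
  have hFirst := posSemidef_projFirstZero n
  have hSecond := posSemidef_projSecondLast n
  refine ⟨feasR n, feasS n, (posSemidef_feasR n).isHermitian, isHermitian_feasS n, ?_, ?_, ?_, ?_,
    trace_feasS n (by omega)⟩
  · rw [feasR_sub_ptransposeB_choiMd]
    exact posSemidef_vecMulVec_self_star _
  · rw [feasR_add_ptransposeB_choiMd]
    exact (((hFirst.smul hc).add hSecond).smul zero_le_two).add (posSemidef_vecMulVec_self_star _)
  · rw [one_kronecker_feasS_sub_ptransposeB_feasR]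
    exact (posSemidef_projBulk_add_smul_swapBulk n (by norm_num)).smul hc
  · rw [one_kronecker_feasS_add_ptransposeB_feasR]
    exact ((((hFirst.smul hc).add (posSemidef_ketbra_self ..)).add hSecond).smul zero_le_two).add
      ((posSemidef_projBulk_add_smul_swapBulk n (by norm_num)).smul hc)
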